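/- Let 0 < Λ₁ ≤ Λ₂, let Ω ⊂ ℝⁿ be open, and let ψ ∈ C²(Ω) be strictly positive. Suppose u ∈ C²(Ω) satisfies M⁻(D²u) − b(x)|Du| + c(x)u ≤ 0 at a point x₀ ∈ Ω with u(x₀) < 0, where b, c: Ω → ℝ. Then ū = u/ψ satisfies at x₀: M⁻(D²ū)(x₀) − b̄(x₀)|Dū(x₀)| + c̄(x₀)ū(x₀) ≤ 0, where b̄ = (2√n·Λ₂·|Dψ|)/ψ + |b| and c̄ = c + (M⁺(D²ψ) + |b|·|Dψ|)/ψ. -/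

import Mathlib

/-! In an orthonormal eigenbasis `(eᵢ)` of `D²u`, `M⁻(D²u) = ∑ wᵢ ⟪eᵢ, D²u eᵢ⟫` with weights
`wᵢ ∈ [Λ₁, Λ₂]`. Since `u = ψ ū`, the product rule splits
`D²u = ψ D²ū + (Dū ⊗ Dψ + Dψ ⊗ Dū) + ū D²ψ`, and the same weighted sum is estimated piece by piece:
for any orthonormal basis and weights in `[Λ₁, Λ₂]` it lies between `M⁻` and `M⁺`, which handles
the first term (`ψ > 0`) and the last one (`ū < 0`), while Cauchy–Schwarz bounds the cross term
below by `-2Λ₂ |Dū| |Dψ|`. Together with `|Du| ≤ ψ |Dū| - ū |Dψ|`, dividing the inequality for `u`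
by `ψ` gives the claim, even with `2Λ₂` in place of `2√n Λ₂`. -/

open Matrix Finset

noncomputable def pucciPlus {n : ℕ} (Λ₁ Λ₂ : ℝ) (M : Matrix (Fin n) (Fin n) ℝ)
    (hM : M.IsHermitian) : ℝ :=
  Λ₂ * ∑ i ∈ univ.filter (fun i => 0 < hM.eigenvalues i), hM.eigenvalues i +
  Λ₁ * ∑ i ∈ univ.filter (fun i => hM.eigenvalues i < 0), hM.eigenvalues i

noncomputable def pucciMinus {n : ℕ} (Λ₁ Λ₂ : ℝ) (M : Matrix (Fin n) (Fin n) ℝ)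
    (hM : M.IsHermitian) : ℝ :=
  Λ₁ * ∑ i ∈ univ.filter (fun i => 0 < hM.eigenvalues i), hM.eigenvalues i +
  Λ₂ * ∑ i ∈ univ.filter (fun i => hM.eigenvalues i < 0), hM.eigenvalues i

open Filter Topology
open scoped RealInnerProductSpace

section Pucci

variable {n : ℕ}

lemma mul_sum_pos_add_mul_sum_neg (a b : ℝ) (l : Fin n → ℝ) :
    a * ∑ i ∈ univ.filter (fun i => 0 < l i), l i +
      b * ∑ i ∈ univ.filter (fun i => l i < 0), l i =
      ∑ i, (if 0 < l i then a else b) * l i := by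
  rw [sum_filter, sum_filter, mul_sum, mul_sum, ← sum_add_distrib]
  refine sum_congr rfl fun i _ => ?_
  rcases lt_trichotomy (l i) 0 with h | h | h
  · simp [h, h.not_gt]
  · simp [h]
  · simp [h, h.not_gt]

lemma pucciMinus_eq_sum (Λ₁ Λ₂ : ℝ) {M : Matrix (Fin n) (Fin n) ℝ} (hM : M.IsHermitian) :
    pucciMinus Λ₁ Λ₂ M hM =
      ∑ i, (if 0 < hM.eigenvalues i then Λ₁ else Λ₂) * hM.eigenvalues i :=
  mul_sum_pos_add_mul_sum_neg Λ₁ Λ₂ hM.eigenvalues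

lemma pucciPlus_eq_sum (Λ₁ Λ₂ : ℝ) {M : Matrix (Fin n) (Fin n) ℝ} (hM : M.IsHermitian) :
    pucciPlus Λ₁ Λ₂ M hM =
      ∑ i, (if 0 < hM.eigenvalues i then Λ₂ else Λ₁) * hM.eigenvalues i :=
  mul_sum_pos_add_mul_sum_neg Λ₂ Λ₁ hM.eigenvalues

lemma pucciMinus_le_sum_mul_eigenvalues {Λ₁ Λ₂ : ℝ} {M : Matrix (Fin n) (Fin n) ℝ}
    (hM : M.IsHermitian) {c : Fin n → ℝ} (hc : ∀ j, c j ∈ Set.Icc Λ₁ Λ₂) :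
    pucciMinus Λ₁ Λ₂ M hM ≤ ∑ j, c j * hM.eigenvalues j := by
  rw [pucciMinus_eq_sum]
  refine sum_le_sum fun j _ => ?_
  split_ifs with h
  · exact mul_le_mul_of_nonneg_right (hc j).1 h.le
  · exact mul_le_mul_of_nonpos_right (hc j).2 (not_lt.mp h)

lemma sum_mul_eigenvalues_le_pucciPlus {Λ₁ Λ₂ : ℝ} {M : Matrix (Fin n) (Fin n) ℝ}
    (hM : M.IsHermitian) {c : Fin n → ℝ} (hc : ∀ j, c j ∈ Set.Icc Λ₁ Λ₂) :
    ∑ j, c j * hM.eigenvalues j ≤ pucciPlus Λ₁ Λ₂ M hM := by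
  rw [pucciPlus_eq_sum]
  refine sum_le_sum fun j _ => ?_
  split_ifs with h
  · exact mul_le_mul_of_nonneg_right (hc j).2 h.le
  · exact mul_le_mul_of_nonpos_right (hc j).1 (not_lt.mp h)

lemma Matrix.IsHermitian.dotProduct_mulVec_self_eq_sum {M : Matrix (Fin n) (Fin n) ℝ}
    (hM : M.IsHermitian) (v : EuclideanSpace ℝ (Fin n)) :
    ⇑v ⬝ᵥ M *ᵥ ⇑v = ∑ j, hM.eigenvalues j * ⟪hM.eigenvectorBasis j, v⟫ ^ 2 := by
  conv_lhs => enter [2, 2]; rw [← hM.eigenvectorBasis.sum_repr' v]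
  simp only [WithLp.ofLp_sum, WithLp.ofLp_smul, mulVec_sum, mulVec_smul,
    hM.mulVec_eigenvectorBasis, dotProduct_sum, dotProduct_smul, smul_eq_mul]
  refine sum_congr rfl fun j _ => ?_
  rw [show ⇑v ⬝ᵥ ⇑(hM.eigenvectorBasis j) = ⟪hM.eigenvectorBasis j, v⟫ by
    simp [EuclideanSpace.inner_eq_star_dotProduct]]
  ring

lemma OrthonormalBasis.sum_mul_inner_sq_mem_Icc {ι E : Type*} [Fintype ι]
    [NormedAddCommGroup E] [InnerProductSpace ℝ E] (V : OrthonormalBasis ι ℝ E)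
    {a b : ℝ} {g : ι → ℝ} (hg : ∀ i, g i ∈ Set.Icc a b) {x : E} (hx : ‖x‖ = 1) :
    ∑ i, g i * ⟪x, V i⟫ ^ 2 ∈ Set.Icc a b := by
  have hsum : ∑ i, ⟪x, V i⟫ ^ 2 = 1 := by rw [V.sum_sq_inner_left, hx, one_pow]
  constructor
  · calc a = ∑ i, a * ⟪x, V i⟫ ^ 2 := by rw [← mul_sum, hsum, mul_one]
      _ ≤ _ := sum_le_sum fun i _ => mul_le_mul_of_nonneg_right (hg i).1 (sq_nonneg _)
  · calc _ ≤ ∑ i, b * ⟪x, V i⟫ ^ 2 :=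
          sum_le_sum fun i _ => mul_le_mul_of_nonneg_right (hg i).2 (sq_nonneg _)
      _ = b := by rw [← mul_sum, hsum, mul_one]

lemma Matrix.IsHermitian.sum_mul_dotProduct_mulVec_eq {M : Matrix (Fin n) (Fin n) ℝ}
    (hM : M.IsHermitian) {ι : Type*} [Fintype ι] (V : ι → EuclideanSpace ℝ (Fin n)) (g : ι → ℝ) :
    ∑ i, g i * (⇑(V i) ⬝ᵥ M *ᵥ ⇑(V i)) =
      ∑ j, (∑ i, g i * ⟪hM.eigenvectorBasis j, V i⟫ ^ 2) * hM.eigenvalues j := by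
  simp only [hM.dotProduct_mulVec_self_eq_sum, mul_sum, sum_mul]
  rw [sum_comm]
  exact sum_congr rfl fun _ _ => sum_congr rfl fun _ _ => by ring

lemma pucciMinus_le_sum_mul_dotProduct_mulVec {Λ₁ Λ₂ : ℝ} {M : Matrix (Fin n) (Fin n) ℝ}
    (hM : M.IsHermitian) (V : OrthonormalBasis (Fin n) ℝ (EuclideanSpace ℝ (Fin n)))
    {g : Fin n → ℝ} (hg : ∀ i, g i ∈ Set.Icc Λ₁ Λ₂) :
    pucciMinus Λ₁ Λ₂ M hM ≤ ∑ i, g i * (⇑(V i) ⬝ᵥ M *ᵥ ⇑(V i)) := by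
  rw [hM.sum_mul_dotProduct_mulVec_eq]
  refine pucciMinus_le_sum_mul_eigenvalues hM fun j => ?_
  exact V.sum_mul_inner_sq_mem_Icc hg (hM.eigenvectorBasis.orthonormal.1 j)

lemma sum_mul_dotProduct_mulVec_le_pucciPlus {Λ₁ Λ₂ : ℝ} {M : Matrix (Fin n) (Fin n) ℝ}
    (hM : M.IsHermitian) (V : OrthonormalBasis (Fin n) ℝ (EuclideanSpace ℝ (Fin n)))
    {g : Fin n → ℝ} (hg : ∀ i, g i ∈ Set.Icc Λ₁ Λ₂) :
    ∑ i, g i * (⇑(V i) ⬝ᵥ M *ᵥ ⇑(V i)) ≤ pucciPlus Λ₁ Λ₂ M hM := by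
  rw [hM.sum_mul_dotProduct_mulVec_eq]
  refine sum_mul_eigenvalues_le_pucciPlus hM fun j => ?_
  exact V.sum_mul_inner_sq_mem_Icc hg (hM.eigenvectorBasis.orthonormal.1 j)

lemma pucciMinus_eq_sum_mul_dotProduct_mulVec (Λ₁ Λ₂ : ℝ) {M : Matrix (Fin n) (Fin n) ℝ}
    (hM : M.IsHermitian) :
    pucciMinus Λ₁ Λ₂ M hM = ∑ i, (if 0 < hM.eigenvalues i then Λ₁ else Λ₂) *
      (⇑(hM.eigenvectorBasis i) ⬝ᵥ M *ᵥ ⇑(hM.eigenvectorBasis i)) := by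
  rw [pucciMinus_eq_sum]
  refine sum_congr rfl fun i _ => ?_
  have hunit : ⇑(hM.eigenvectorBasis i) ⬝ᵥ ⇑(hM.eigenvectorBasis i) = 1 := by
    have h := real_inner_self_eq_norm_sq (hM.eigenvectorBasis i)
    rwa [hM.eigenvectorBasis.orthonormal.1 i, one_pow, EuclideanSpace.inner_eq_star_dotProduct,
      star_trivial] at h
  rw [hM.mulVec_eigenvectorBasis, dotProduct_smul, smul_eq_mul, hunit, mul_one]

lemma OrthonormalBasis.neg_mul_norm_mul_norm_le_sum_mul_inner_mul_inner {ι E : Type*}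
    [Fintype ι] [NormedAddCommGroup E] [InnerProductSpace ℝ E] (V : OrthonormalBasis ι ℝ E)
    {Λ : ℝ} (hΛ : 0 ≤ Λ) {g : ι → ℝ} (hg : ∀ i, g i ∈ Set.Icc 0 Λ) (p q : E) :
    -(Λ * (‖p‖ * ‖q‖)) ≤ ∑ i, g i * (⟪V i, p⟫ * ⟪V i, q⟫) := by
  have cauchySchwarz : ∑ i, |⟪V i, p⟫| * |⟪V i, q⟫| ≤ ‖p‖ * ‖q‖ := by
    simpa only [sq_abs, V.sum_sq_inner_right, Real.sqrt_sq (norm_nonneg _)] using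
      Real.sum_mul_le_sqrt_mul_sqrt univ (fun i => |⟪V i, p⟫|) (fun i => |⟪V i, q⟫|)
  calc -(Λ * (‖p‖ * ‖q‖)) ≤ ∑ i, -(Λ * (|⟪V i, p⟫| * |⟪V i, q⟫|)) := by
        rw [sum_neg_distrib, ← mul_sum]
        exact neg_le_neg (mul_le_mul_of_nonneg_left cauchySchwarz hΛ)
    _ ≤ _ := by
        refine sum_le_sum fun i _ => ?_
        rw [← abs_mul]
        have := neg_abs_le (⟪V i, p⟫ * ⟪V i, q⟫)
        nlinarith [(hg i).1, (hg i).2, abs_nonneg (⟪V i, p⟫ * ⟪V i, q⟫)]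

lemma dotProduct_smul_add_vecMulVec_add_smul_mulVec (A B : Matrix (Fin n) (Fin n) ℝ)
    (p q v : Fin n → ℝ) (a b : ℝ) :
    v ⬝ᵥ (a • A + (vecMulVec p q + vecMulVec q p) + b • B) *ᵥ v =
      a * (v ⬝ᵥ A *ᵥ v) + 2 * ((p ⬝ᵥ v) * (q ⬝ᵥ v)) + b * (v ⬝ᵥ B *ᵥ v) := by
  simp only [add_mulVec, smul_mulVec, vecMulVec_mulVec, dotProduct_add, dotProduct_smul,
    op_smul_eq_smul, smul_eq_mul, dotProduct_comm v p, dotProduct_comm v q]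
  ring

lemma le_pucciMinus_of_eq_smul_add_vecMulVec_add_smul {Λ₁ Λ₂ : ℝ} (hΛ₁ : 0 < Λ₁) (hΛ : Λ₁ ≤ Λ₂)
    {M A B : Matrix (Fin n) (Fin n) ℝ} (hM : M.IsHermitian) (hA : A.IsHermitian)
    (hB : B.IsHermitian) (p q : EuclideanSpace ℝ (Fin n)) {a b : ℝ} (ha : 0 ≤ a) (hb : b ≤ 0)
    (hMeq : M = a • A + (vecMulVec ⇑p ⇑q + vecMulVec ⇑q ⇑p) + b • B) :
    a * pucciMinus Λ₁ Λ₂ A hA - 2 * Λ₂ * (‖p‖ * ‖q‖) + b * pucciPlus Λ₁ Λ₂ B hB ≤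
      pucciMinus Λ₁ Λ₂ M hM := by
  set V := hM.eigenvectorBasis
  set g : Fin n → ℝ := fun i => if 0 < hM.eigenvalues i then Λ₁ else Λ₂
  have hg : ∀ i, g i ∈ Set.Icc Λ₁ Λ₂ := fun i => by
    simp only [g]; split_ifs <;> simp [hΛ]
  have hA' := mul_le_mul_of_nonneg_left (pucciMinus_le_sum_mul_dotProduct_mulVec hA V hg) ha
  have hB' := mul_le_mul_of_nonpos_left (sum_mul_dotProduct_mulVec_le_pucciPlus hB V hg) hb
  have hpq := V.neg_mul_norm_mul_norm_le_sum_mul_inner_mul_inner (hΛ₁.le.trans hΛ)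
    (fun i => ⟨hΛ₁.le.trans (hg i).1, (hg i).2⟩) p q
  have hdot : ∀ (x : EuclideanSpace ℝ (Fin n)) i, ⇑x ⬝ᵥ ⇑(V i) = ⟪V i, x⟫ := fun x i => by
    simp [EuclideanSpace.inner_eq_star_dotProduct]
  have hquad : ∀ v, v ⬝ᵥ M *ᵥ v =
      a * (v ⬝ᵥ A *ᵥ v) + 2 * ((⇑p ⬝ᵥ v) * (⇑q ⬝ᵥ v)) + b * (v ⬝ᵥ B *ᵥ v) := fun v => by
    rw [hMeq, dotProduct_smul_add_vecMulVec_add_smul_mulVec]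
  have hsplit : pucciMinus Λ₁ Λ₂ M hM =
      a * ∑ i, g i * (⇑(V i) ⬝ᵥ A *ᵥ ⇑(V i)) + 2 * ∑ i, g i * (⟪V i, p⟫ * ⟪V i, q⟫) +
        b * ∑ i, g i * (⇑(V i) ⬝ᵥ B *ᵥ ⇑(V i)) := by
    rw [pucciMinus_eq_sum_mul_dotProduct_mulVec, mul_sum, mul_sum, mul_sum,
      ← sum_add_distrib, ← sum_add_distrib]
    refine sum_congr rfl fun i _ => ?_
    rw [hquad, hdot p, hdot q]
    ring
  linarith

end Pucci

section Hessian

variable {E : Type*} [NormedAddCommGroup E] [NormedSpace ℝ E] {f g : E → ℝ} {x : E}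

lemma fderiv_fderiv_apply_mul (hf : ContDiffAt ℝ 2 f x) (hg : ContDiffAt ℝ 2 g x) (v w : E) :
    fderiv ℝ (fun y => fderiv ℝ (fun z => f z * g z) y v) x w =
      f x * fderiv ℝ (fun y => fderiv ℝ g y v) x w +
        (fderiv ℝ f x w * fderiv ℝ g x v + fderiv ℝ g x w * fderiv ℝ f x v) +
        g x * fderiv ℝ (fun y => fderiv ℝ f y v) x w := by
  have hdiff : ∀ {h : E → ℝ}, ContDiffAt ℝ 2 h x →
      (∀ᶠ y in 𝓝 x, DifferentiableAt ℝ h y) ∧ DifferentiableAt ℝ (fun y => fderiv ℝ h y v) x :=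
    fun hh => ⟨(hh.eventually (by simp)).mono fun _ hy => hy.differentiableAt two_ne_zero,
      ((hh.fderiv_right (m := 1) le_rfl).differentiableAt one_ne_zero).clm_apply
        (differentiableAt_const v)⟩
  obtain ⟨hf₁, hf₂⟩ := hdiff hf
  obtain ⟨hg₁, hg₂⟩ := hdiff hg
  have hprod : (fun y => fderiv ℝ (fun z => f z * g z) y v) =ᶠ[𝓝 x]
      fun y => f y * fderiv ℝ g y v + g y * fderiv ℝ f y v := by
    filter_upwards [hf₁, hg₁] with y hfy hgy
    simp [fderiv_fun_mul hfy hgy]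
  have hfx := hf.differentiableAt two_ne_zero
  have hgx := hg.differentiableAt two_ne_zero
  rw [hprod.fderiv_eq, fderiv_fun_add (hfx.fun_mul hg₂) (hgx.fun_mul hf₂),
    fderiv_fun_mul hfx hg₂, fderiv_fun_mul hgx hf₂]
  simp only [_root_.add_apply, _root_.smul_apply, smul_eq_mul]
  ring

lemma gradient_fun_mul {F : Type*} [NormedAddCommGroup F] [InnerProductSpace ℝ F]
    [CompleteSpace F] {f g : F → ℝ} {x : F} (hf : DifferentiableAt ℝ f x)
    (hg : DifferentiableAt ℝ g x) :
    gradient (fun y => f y * g y) x = f x • gradient g x + g x • gradient f x := by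
  simp [gradient, fderiv_fun_mul hf hg]

lemma norm_gradient_fun_mul_le {F : Type*} [NormedAddCommGroup F] [InnerProductSpace ℝ F]
    [CompleteSpace F] {f g : F → ℝ} {x : F} (hf : DifferentiableAt ℝ f x)
    (hg : DifferentiableAt ℝ g x) :
    ‖gradient (fun y => f y * g y) x‖ ≤ |f x| * ‖gradient g x‖ + |g x| * ‖gradient f x‖ := by
  rw [gradient_fun_mul hf hg, ← Real.norm_eq_abs, ← Real.norm_eq_abs, ← norm_smul, ← norm_smul]
  exact norm_add_le _ _

end Hessian

section HessianMatrix

variable {ι : Type*} [DecidableEq ι] {f g : EuclideanSpace ℝ ι → ℝ} {x : EuclideanSpace ℝ ι}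

noncomputable def hessianMatrix (f : EuclideanSpace ℝ ι → ℝ) (x : EuclideanSpace ℝ ι) :
    Matrix ι ι ℝ :=
  Matrix.of fun i j =>
    fderiv ℝ (fun y => fderiv ℝ f y (EuclideanSpace.single j 1)) x (EuclideanSpace.single i 1)

lemma Filter.EventuallyEq.hessianMatrix_eq (h : f =ᶠ[𝓝 x] g) :
    hessianMatrix f x = hessianMatrix g x := by
  ext i j
  have hj : (fun y => fderiv ℝ f y (EuclideanSpace.single j 1)) =ᶠ[𝓝 x]
      fun y => fderiv ℝ g y (EuclideanSpace.single j 1) :=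
    (h.fderiv (𝕜 := ℝ)).mono fun y hy => by simp only [hy]
  rw [hessianMatrix, hessianMatrix, of_apply, of_apply, hj.fderiv_eq]

variable [Fintype ι]

lemma fderiv_apply_single (f : EuclideanSpace ℝ ι → ℝ) (x : EuclideanSpace ℝ ι) (i : ι) :
    fderiv ℝ f x (EuclideanSpace.single i 1) = gradient f x i := by
  simp [← inner_gradient_left, EuclideanSpace.inner_single_right]

lemma hessianMatrix_fun_mul (hf : ContDiffAt ℝ 2 f x) (hg : ContDiffAt ℝ 2 g x) :
    hessianMatrix (fun y => f y * g y) x =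
      f x • hessianMatrix g x +
        (vecMulVec ⇑(gradient f x) ⇑(gradient g x) + vecMulVec ⇑(gradient g x) ⇑(gradient f x)) +
        g x • hessianMatrix f x := by
  ext i j
  simp only [Matrix.add_apply, Matrix.smul_apply, vecMulVec_apply, smul_eq_mul,
    ← fderiv_apply_single]
  exact fderiv_fderiv_apply_mul hf hg _ _

end HessianMatrix

lemma EuclideanSpace.norm_le_sqrt_card_mul_norm {n : ℕ} (v : EuclideanSpace ℝ (Fin n)) :
    ‖v‖ ≤ √n * ‖v‖ := by
  rcases n.eq_zero_or_pos with rfl | hn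
  · simp [Subsingleton.elim v 0]
  · exact le_mul_of_one_le_left (norm_nonneg v) (Real.one_le_sqrt.mpr (by exact_mod_cast hn))

/-- at a point where u < 0, the quotient ubar = u / psi satisfies the
transformed Pucci differential inequality with modified coefficients bbar and cbar. -/
theorem stmt19 {n : ℕ} (Λ₁ Λ₂ : ℝ) (hΛ₁ : 0 < Λ₁) (hΛ : Λ₁ ≤ Λ₂)
    (Ω : Set (EuclideanSpace ℝ (Fin n))) (hΩ : IsOpen Ω)
    (ψ : EuclideanSpace ℝ (Fin n) → ℝ) (hψ : ContDiffOn ℝ 2 ψ Ω)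
    (hψpos : ∀ x ∈ Ω, 0 < ψ x)
    (u : EuclideanSpace ℝ (Fin n) → ℝ) (hu : ContDiffOn ℝ 2 u Ω)
    (b c : EuclideanSpace ℝ (Fin n) → ℝ)
    (ubar : EuclideanSpace ℝ (Fin n) → ℝ) (hubar : ∀ x, ubar x = u x / ψ x)
    (Hu Hψ Hubar : EuclideanSpace ℝ (Fin n) → Matrix (Fin n) (Fin n) ℝ)
    (hHu : ∀ x i j, Hu x i j =
      fderiv ℝ (fun y => fderiv ℝ u y (EuclideanSpace.single j 1)) x
        (EuclideanSpace.single i 1))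
    (hHψ : ∀ x i j, Hψ x i j =
      fderiv ℝ (fun y => fderiv ℝ ψ y (EuclideanSpace.single j 1)) x
        (EuclideanSpace.single i 1))
    (hHubar : ∀ x i j, Hubar x i j =
      fderiv ℝ (fun y => fderiv ℝ ubar y (EuclideanSpace.single j 1)) x
        (EuclideanSpace.single i 1))
    (x₀ : EuclideanSpace ℝ (Fin n)) (hx₀ : x₀ ∈ Ω) (hneg : u x₀ < 0)
    (hu0 : (Hu x₀).IsHermitian) (hψ0 : (Hψ x₀).IsHermitian)
    (hub0 : (Hubar x₀).IsHermitian)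
    (hineq : pucciMinus Λ₁ Λ₂ (Hu x₀) hu0 - b x₀ * ‖gradient u x₀‖
      + c x₀ * u x₀ ≤ 0) :
    pucciMinus Λ₁ Λ₂ (Hubar x₀) hub0
      - ((2 * Real.sqrt n * Λ₂ * ‖gradient ψ x₀‖) / ψ x₀ + |b x₀|)
        * ‖gradient ubar x₀‖
      + (c x₀ + (pucciPlus Λ₁ Λ₂ (Hψ x₀) hψ0 + |b x₀| * ‖gradient ψ x₀‖) / ψ x₀)
        * ubar x₀ ≤ 0 := by
  have hΩx₀ : Ω ∈ 𝓝 x₀ := hΩ.mem_nhds hx₀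
  have hψx₀ : 0 < ψ x₀ := hψpos x₀ hx₀
  have hubx₀ : ubar x₀ < 0 := by rw [hubar]; exact div_neg_of_neg_of_pos hneg hψx₀
  have hψ₂ : ContDiffAt ℝ 2 ψ x₀ := hψ.contDiffAt hΩx₀
  have hub₂ : ContDiffAt ℝ 2 ubar x₀ :=
    ((hu.div hψ fun x hx => (hψpos x hx).ne').congr fun x _ => hubar x).contDiffAt hΩx₀
  have hprod : u =ᶠ[𝓝 x₀] fun y => ψ y * ubar y := by
    filter_upwards [hΩx₀] with y hy
    rw [hubar, mul_div_cancel₀ _ (hψpos y hy).ne']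
  have hHess : Hu x₀ = ψ x₀ • Hubar x₀ + (vecMulVec ⇑(gradient ψ x₀) ⇑(gradient ubar x₀) +
      vecMulVec ⇑(gradient ubar x₀) ⇑(gradient ψ x₀)) + ubar x₀ • Hψ x₀ := by
    rw [show Hu x₀ = hessianMatrix u x₀ from Matrix.ext (hHu x₀),
      show Hubar x₀ = hessianMatrix ubar x₀ from Matrix.ext (hHubar x₀),
      show Hψ x₀ = hessianMatrix ψ x₀ from Matrix.ext (hHψ x₀), hprod.hessianMatrix_eq,
      hessianMatrix_fun_mul hψ₂ hub₂]
  have hpucci := le_pucciMinus_of_eq_smul_add_vecMulVec_add_smul hΛ₁ hΛ hu0 hub0 hψ0 _ _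
    hψx₀.le hubx₀.le hHess
  have hgrad := norm_gradient_fun_mul_le (hψ₂.differentiableAt two_ne_zero)
    (hub₂.differentiableAt two_ne_zero)
  rw [← hprod.gradient_eq, abs_of_pos hψx₀, abs_of_neg hubx₀] at hgrad
  have hb : b x₀ * ‖gradient u x₀‖ ≤ |b x₀| * (ψ x₀ * ‖gradient ubar x₀‖ +
      -ubar x₀ * ‖gradient ψ x₀‖) :=
    (mul_le_mul_of_nonneg_right (le_abs_self _) (norm_nonneg _)).trans
      (mul_le_mul_of_nonneg_left hgrad (abs_nonneg _))
  have hsqrt := mul_le_mul_of_nonneg_left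
    (EuclideanSpace.norm_le_sqrt_card_mul_norm (gradient ubar x₀))
    (mul_nonneg (by linarith) (norm_nonneg _) : 0 ≤ 2 * Λ₂ * ‖gradient ψ x₀‖)
  rw [hprod.self_of_nhds] at hineq
  field_simp
  linarith
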